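/- arXiv:2007.12557 — 3 statements merged into one kernel-verified Lean document; each statement's English description precedes it below -/
import Mathlib

section
/- Let N, N' be integers with N' > N^2 > n^2, x_1, ..., x_n ∈ {0,...,N−1} additive shares of x mod N, and δ_1, ..., δ_n ∈ Z_{N'} additive shares modulo N' of the wrap count δ = ⌊(Σ x_i)/N⌋. Then setting y_i = x_i − δ_i·N (mod N'), the values y_1, ..., y_n form an additive sharing of x modulo N', i.e., Σ y_i ≡ x (mod N'). -/
/-- Correctness of `LiftMod`: subtracting `δᵢ·N` from the shares lifted to `ZMod N'`
gives an additive sharing of `x` modulo `N'`. -/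
theorem lift_mod (n N N' : ℕ) (hNN' : N ^ 2 < N') (hnN : n ^ 2 < N ^ 2)
    (x : Fin n → ℕ) (hx : ∀ i, x i < N) (xv : ℕ) (hxv : xv < N)
    (hcong : (∑ i, x i) % N = xv)
    (δ : Fin n → ZMod N')
    (hδ : ∑ i, δ i = (((∑ i, x i) / N : ℕ) : ZMod N')) :
    ∑ i, (((x i : ℕ) : ZMod N') - δ i * (N : ZMod N')) = (xv : ZMod N') := by
  rw [Finset.sum_sub_distrib, ← Finset.sum_mul, hδ, ← Nat.cast_sum, ← hcong]
  set S := ∑ i, x i with hS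
  have h : S % N + N * (S / N) = S := Nat.mod_add_div S N
  have : ((S : ℕ) : ZMod N') = (((S % N + N * (S / N) : ℕ)) : ZMod N') := by rw [h]
  rw [this]
  push_cast
  ring
end

section
/- Let N, N' be integers with N' > N^2, and let ([a]^N, [b]^N, [c]^N) be additive sharings modulo N with c ≡ ab (mod N), where 0 ≤ a, b, c < N. Then the integer σ = (ab − c)/N satisfies 0 ≤ σ ≤ N − 2, and over Z_{N'} one has ab − c ≡ σN (mod N') exactly; furthermore for any prime Q, ab ≡ c + σN (mod Q), so ([a mod Q], [b mod Q], [c + σN mod Q]) is a valid Beaver triple modulo Q. -/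
/-- Correctness of Beaver triple conversion `TripConv`: with `c = ab mod N`, the
quotient `σ = (ab - c)/N` satisfies `0 ≤ σ ≤ N-2`, the relation `ab - c = σN` holds
exactly over `ZMod N'` for `N' > N²`, and for any prime `Q`,
`ab ≡ c + σN (mod Q)`. -/
theorem triple_conversion (N N' a b c : ℕ) (hNN' : N ^ 2 < N')
    (ha : a < N) (hb : b < N) (hc : c < N) (hab : c = (a * b) % N) :
    N ∣ (a * b - c) ∧
      (a * b - c) / N ≤ N - 2 ∧
      ((a * b - c : ℕ) : ZMod N') = ((((a * b - c) / N) * N : ℕ) : ZMod N') ∧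
      (∀ Q : ℕ, Q.Prime →
        ((a * b : ℕ) : ZMod Q) = ((c + ((a * b - c) / N) * N : ℕ) : ZMod Q)) := by
  have hN : 0 < N := lt_of_le_of_lt (Nat.zero_le a) ha
  have hmd := Nat.mod_add_div (a * b) N
  have hce : a * b - c = N * (a * b / N) := by omega
  have hdvd : N ∣ a * b - c := ⟨a * b / N, hce⟩
  have hq : (a * b - c) / N = a * b / N := by
    rw [hce, Nat.mul_div_cancel_left _ hN]
  have hcle : c ≤ a * b := hab ▸ Nat.mod_le _ _
  have hbound : a * b / N ≤ N - 2 := by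
    rcases Nat.eq_or_lt_of_le hN with h1 | h1
    · have : a = 0 := by omega
      simp [this]
    · have hab' : a * b ≤ (N - 1) * (N - 1) :=
        Nat.mul_le_mul (by omega) (by omega)
      have h2 : (N - 1) * (N - 1) < N * (N - 1) :=
        Nat.mul_lt_mul_of_lt_of_le (by omega) le_rfl (by omega)
      have := Nat.div_lt_of_lt_mul (lt_of_le_of_lt hab' h2)
      omega
  have hmul : ((a * b - c) / N) * N = a * b - c := Nat.div_mul_cancel hdvd
  refine ⟨hdvd, hq ▸ hbound, by rw [hmul], fun Q hQ => ?_⟩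
  rw [hmul]
  congr 1
  omega
end

section
/- Bit-comparison map correctness: let a = Σ_{i=0}^{k−1} a_i 2^i and b = Σ_{i=0}^{k-1} b_i 2^i with a_i, b_i ∈ {0,1}. Define d_i = a_i ⊕ b_i, x_i = Π_{j=i+1}^{k−1}(d_j + 1) for 0 ≤ i ≤ k−2, x_{k−1} = 1, and y_i = b_i(1 − a_i). Then y = Σ_{i=0}^{k−1} x_i y_i is an integer whose least significant bit equals 1 if a < b and 0 if a ≥ b. -/
lemma sum_bits_lt (k : ℕ) (a : ℕ → ℕ) (ha : ∀ i < k, a i ≤ 1) :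
    (∑ i ∈ Finset.range k, a i * 2 ^ i) < 2 ^ k := by
  induction k with
  | zero => simp
  | succ k ih =>
    have := ih (fun i hi => ha i (hi.trans (Nat.lt_succ_self k)))
    have hk := ha k (Nat.lt_succ_self k)
    rw [Finset.sum_range_succ, pow_succ]
    have h2 : a k * 2 ^ k ≤ 1 * 2 ^ k := Nat.mul_le_mul_right _ hk
    omega

/-- Correctness of the `BitLTMap` step of `BitLTC`: with `dᵢ = aᵢ ⊕ bᵢ`,
`xᵢ = Π_{j>i} (dⱼ + 1)` and `yᵢ = bᵢ(1 - aᵢ)`, the least significant bit of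
`y = Σ xᵢ yᵢ` is `1` iff `a < b`. -/
theorem bit_lt_map (k : ℕ) (a b : ℕ → ℕ)
    (ha : ∀ i < k, a i ≤ 1) (hb : ∀ i < k, b i ≤ 1) :
    (∑ i ∈ Finset.range k,
        (∏ j ∈ Finset.Ico (i + 1) k, ((a j ^^^ b j) + 1)) *
          (b i * (1 - a i))) % 2 =
      (if (∑ i ∈ Finset.range k, a i * 2 ^ i) <
          (∑ i ∈ Finset.range k, b i * 2 ^ i) then 1 else 0) := by
  induction k with
  | zero => simp
  | succ k ih =>
    have ha' : ∀ i < k, a i ≤ 1 := fun i hi => ha i (hi.trans (Nat.lt_succ_self k))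
    have hb' : ∀ i < k, b i ≤ 1 := fun i hi => hb i (hi.trans (Nat.lt_succ_self k))
    have hak := ha k (Nat.lt_succ_self k)
    have hbk := hb k (Nat.lt_succ_self k)
    have hsa := sum_bits_lt k a ha'
    have hsb := sum_bits_lt k b hb'
    have IH := ih ha' hb'
    rw [Finset.sum_range_succ, Finset.sum_range_succ, Finset.sum_range_succ]
    have hprod : ∀ i ∈ Finset.range k,
        (∏ j ∈ Finset.Ico (i + 1) (k + 1), ((a j ^^^ b j) + 1)) * (b i * (1 - a i))
        = ((a k ^^^ b k) + 1) *
            ((∏ j ∈ Finset.Ico (i + 1) k, ((a j ^^^ b j) + 1)) * (b i * (1 - a i))) := by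
      intro i hi
      rw [Finset.prod_Ico_succ_top (Finset.mem_range.mp hi)]
      ring
    rw [Finset.sum_congr rfl hprod, ← Finset.mul_sum]
    simp only [Finset.Ico_self, Finset.prod_empty, one_mul]
    set S := ∑ i ∈ Finset.range k,
        (∏ j ∈ Finset.Ico (i + 1) k, ((a j ^^^ b j) + 1)) * (b i * (1 - a i)) with hS
    set A := ∑ i ∈ Finset.range k, a i * 2 ^ i with hA
    set B := ∑ i ∈ Finset.range k, b i * 2 ^ i with hB
    interval_cases hak' : (a k) <;> interval_cases hbk' : (b k) <;>
      simp only [Nat.zero_xor, Nat.xor_zero, Nat.xor_self] <;>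
      norm_num <;>
      split_ifs at IH ⊢ <;> omega
end
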